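/- arXiv:0904.2273 — 3 statements merged into one kernel-verified Lean document; each statement's English description precedes it below -/
import Mathlib

section
/- Let R be a PVMD and let I be a t-ideal of R. If I is t-invertible, then the fractional ideal I⁻¹ = (R:I) is not a subring of the quotient field K of R. (In fact this holds for any integral domain R.) -/
/-!
Common definitions: star operations (`v`- and `t`-closure), `t`-ideals, `t`-invertibility,
PVMDs, overrings, `t`-linked and `t`-flat overrings, localizations inside the quotient
field, Nagata and Kaplansky transforms, endomorphism rings of ideals.
-/

open scoped Classical

namespace PVMDPaper

noncomputable section

section Generic

variable (A : Type*) [CommRing A] (K : Type*) [Field K] [Algebra A K]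

/-- The image of an integral ideal of `A` inside the field `K`, as an `A`-submodule of `K`. -/
def toK (I : Ideal A) : Submodule A K := Submodule.map (Algebra.linearMap A K) I

variable {A K}

/-- The dual `I⁻¹ = (A : I) = {x ∈ K : x I ⊆ A}` of a submodule of `K`. -/
def dual (I : Submodule A K) : Submodule A K := 1 / I

/-- The `v`-closure `I_v = (I⁻¹)⁻¹`. -/
def vOp (I : Submodule A K) : Submodule A K := 1 / (1 / I)

/-- The `t`-closure `I_t`: the union of `J_v` where `J` ranges over the nonzero finitely
generated submodules `J ≤ I` (the union of this directed family is its supremum). -/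
def tOp (I : Submodule A K) : Submodule A K :=
  sSup {V | ∃ J : Submodule A K, J ≠ ⊥ ∧ J.FG ∧ J ≤ I ∧ V = vOp J}

variable (K)

/-- An (integral) ideal `I` of `A` is a `t`-ideal if `I = I_t`. -/
def IsTIdeal (I : Ideal A) : Prop := tOp (toK A K I) = toK A K I

/-- An ideal `I` is `t`-invertible if `(I I⁻¹)_t = A`. -/
def IsTInvertible (I : Ideal A) : Prop := tOp (toK A K I * dual (toK A K I)) = 1

/-- A `t`-maximal ideal: an ideal maximal in the set of proper integral `t`-ideals. -/
def IsTMaximal (M : Ideal A) : Prop :=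
  M ≠ ⊤ ∧ IsTIdeal K M ∧ ∀ J : Ideal A, J ≠ ⊤ → IsTIdeal K J → M ≤ J → J = M

variable (A)

/-- `A` is a Prüfer `v`-multiplication domain: every nonzero finitely generated ideal
is `t`-invertible. -/
def IsPVMD : Prop := ∀ I : Ideal A, I ≠ ⊥ → I.FG → IsTInvertible K I

/-- `Spec_t(A)` is Noetherian: the ascending chain condition on radical `t`-ideals. -/
def TSpecNoetherian : Prop :=
  ∀ f : ℕ →o Ideal A, (∀ n, IsTIdeal K (f n) ∧ (f n).radical = f n) →
    ∃ n, ∀ m, n ≤ m → f m = f n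

variable {A K}

/-- A submodule of `K` is a subring of `K` iff it contains `1` and is closed under
multiplication (being an additive subgroup already). -/
def IsSubringOf (S : Submodule A K) : Prop :=
  (1 : K) ∈ S ∧ ∀ x ∈ S, ∀ y ∈ S, x * y ∈ S

variable (K)

/-- The localization `A_P = {a/s : a ∈ A, s ∈ A ∖ P}` viewed as a subset of `K`. -/
def loc (P : Ideal A) : Set K :=
  {x | ∃ a s : A, s ∉ P ∧ x * algebraMap A K s = algebraMap A K a}

/-- The set `J A_P = {a/s : a ∈ J, s ∈ A ∖ P} ⊆ K`. -/
def locIdealAt (J P : Ideal A) : Set K :=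
  {x | ∃ a ∈ J, ∃ s : A, s ∉ P ∧ x * algebraMap A K s = algebraMap A K a}

/-- `Z(A, I)`: the set of zero divisors on `A/I`. -/
def ZSet (I : Ideal A) : Set A := {x | ∃ a : A, a ∉ I ∧ x * a ∈ I}

/-- `Q` is a maximal prime ideal of `Z(A,I)`: a prime contained in `Z(A,I)`, maximal
(under inclusion) among the primes contained in `Z(A,I)`. -/
def MaxPrimeOfZ (I Q : Ideal A) : Prop :=
  Q.IsPrime ∧ (Q : Set A) ⊆ ZSet I ∧
    ∀ Q' : Ideal A, Q'.IsPrime → (Q' : Set A) ⊆ ZSet I → Q ≤ Q' → Q' = Q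

end Generic

section Overring

variable {R : Type*} [CommRing R] [IsDomain R]
variable {K : Type*} [Field K] [Algebra R K] [IsFractionRing R K]

/-- The extension `IT` of an ideal `I` of `R` to an overring `T`, as a `T`-submodule of `K`. -/
def extendI (I : Ideal R) (T : Subalgebra R K) : Submodule T K :=
  Submodule.span T (algebraMap R K '' (I : Set R))

/-- The extension `IT` of an `R`-submodule `I` of `K` to an overring `T`. -/
def extendS (I : Submodule R K) (T : Subalgebra R K) : Submodule T K :=
  Submodule.span T (I : Set K)

/-- An overring `T` of `R` is `t`-linked over `R` if `(IT)⁻¹ = T` for each finitely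
generated ideal `I` of `R` with `I⁻¹ = R`. -/
def IsTLinked (T : Subalgebra R K) : Prop :=
  ∀ I : Ideal R, I.FG → dual (toK R K I) = 1 → dual (extendI I T) = 1

/-- An overring `T` of `R` is `t`-flat over `R` if `T_M = R_{M ∩ R}` for each
`t`-maximal ideal `M` of `T`. -/
def IsTFlat (T : Subalgebra R K) : Prop :=
  ∀ M : Ideal T, IsTMaximal K M → loc K M = loc K (M.comap (algebraMap R T))

variable (R K)

/-- `R` is a `tQR`-domain: a PVMD all of whose `t`-linked overrings are localizations
of `R` at multiplicative sets. -/
def IsTQR : Prop :=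
  IsPVMD R K ∧ ∀ T : Subalgebra R K, IsTLinked T → ∃ S : Submonoid R,
    (T : Set K) = {x | ∃ a : R, ∃ s ∈ S, x * algebraMap R K s = algebraMap R K a}

variable {R K}
variable (K)

/-- The endomorphism ring `(I : I) = {x ∈ K : x I ⊆ I}` of an ideal `I`, as an
overring of `R`. -/
def endoRing (I : Ideal R) : Subalgebra R K where
  carrier := {x : K | ∀ y ∈ toK R K I, x * y ∈ toK R K I}
  mul_mem' := by
    intro a b ha hb y hy
    rw [mul_assoc]
    exact ha _ (hb _ hy)
  one_mem' := by
    intro y hy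
    rwa [one_mul]
  add_mem' := by
    intro a b ha hb y hy
    rw [add_mul]
    exact Submodule.add_mem _ (ha y hy) (hb y hy)
  zero_mem' := by
    intro y hy
    rw [zero_mul]
    exact Submodule.zero_mem _
  algebraMap_mem' := by
    intro r y hy
    rw [← Algebra.smul_def]
    exact Submodule.smul_mem _ r hy

set_option synthInstance.maxHeartbeats 400000 in
/-- The ideal `I`, viewed as an ideal of its endomorphism ring `(I : I)`. -/
def idealInEndo (I : Ideal R) : Ideal (endoRing K I) where
  carrier := {x | (x : K) ∈ toK R K I}
  add_mem' := by
    intro a b ha hb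
    simp only [Set.mem_setOf_eq] at *
    rw [AddMemClass.coe_add]
    exact Submodule.add_mem _ ha hb
  zero_mem' := by
    simp only [Set.mem_setOf_eq, ZeroMemClass.coe_zero]
    exact Submodule.zero_mem _
  smul_mem' := by
    intro c x hx
    simp only [Set.mem_setOf_eq] at *
    rw [smul_eq_mul, MulMemClass.coe_mul]
    exact c.2 _ hx

/-- The Kaplansky transform `Ω(I) = {u ∈ K : ∀ a ∈ I, ∃ n ≥ 1, u aⁿ ∈ R}`, as an
overring of `R`. -/
def kaplansky (I : Ideal R) : Subalgebra R K where
  carrier := {u : K | ∀ a ∈ I, ∃ n : ℕ, 0 < n ∧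
    ∃ r : R, u * (algebraMap R K a) ^ n = algebraMap R K r}
  mul_mem' := by
    intro u v hu hv a ha
    obtain ⟨n, hn, r, hr⟩ := hu a ha
    obtain ⟨m, hm, s, hs⟩ := hv a ha
    refine ⟨n + m, by omega, r * s, ?_⟩
    rw [map_mul, ← hr, ← hs, pow_add]
    ring
  one_mem' := by
    intro a ha
    exact ⟨1, one_pos, a, by rw [pow_one, one_mul]⟩
  add_mem' := by
    intro u v hu hv a ha
    obtain ⟨n, hn, r, hr⟩ := hu a ha
    obtain ⟨m, hm, s, hs⟩ := hv a ha
    refine ⟨n + m, by omega, r * a ^ m + s * a ^ n, ?_⟩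
    rw [map_add, map_mul, map_mul, map_pow, map_pow, ← hr, ← hs, pow_add, add_mul]
    ring
  zero_mem' := by
    intro a ha
    exact ⟨1, one_pos, 0, by rw [map_zero, zero_mul]⟩
  algebraMap_mem' := by
    intro r a ha
    exact ⟨1, one_pos, r * a, by rw [map_mul, pow_one]⟩

/-- The Nagata (ideal) transform `T(I) = ⋃_{n ≥ 1} (R : Iⁿ)`, as an overring of `R`. -/
def nagata (I : Ideal R) : Subalgebra R K where
  carrier := {x : K | ∃ n : ℕ, ∀ y ∈ I ^ (n + 1),
    ∃ r : R, x * algebraMap R K y = algebraMap R K r}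
  mul_mem' := by
    intro x x' hx hx'
    obtain ⟨n, hn⟩ := hx
    obtain ⟨m, hm⟩ := hx'
    refine ⟨n + m + 1, fun y hy => ?_⟩
    rw [show n + m + 1 + 1 = (n + 1) + (m + 1) by omega, pow_add] at hy
    refine Submodule.mul_induction_on hy ?_ ?_
    · intro a ha b hb
      obtain ⟨r, hr⟩ := hn a ha
      obtain ⟨s, hs⟩ := hm b hb
      refine ⟨r * s, ?_⟩
      rw [map_mul, map_mul, ← hr, ← hs]
      ring
    · rintro y1 y2 ⟨r1, h1⟩ ⟨r2, h2⟩
      exact ⟨r1 + r2, by rw [map_add, map_add, mul_add, h1, h2]⟩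
  one_mem' := ⟨0, fun y _ => ⟨y, by rw [one_mul]⟩⟩
  add_mem' := by
    intro x x' hx hx'
    obtain ⟨n, hn⟩ := hx
    obtain ⟨m, hm⟩ := hx'
    refine ⟨n + m + 1, fun y hy => ?_⟩
    have h1 : y ∈ I ^ (n + 1) := Ideal.pow_le_pow_right (by omega) hy
    have h2 : y ∈ I ^ (m + 1) := Ideal.pow_le_pow_right (by omega) hy
    obtain ⟨r, hr⟩ := hn y h1
    obtain ⟨s, hs⟩ := hm y h2
    exact ⟨r + s, by rw [map_add, add_mul, hr, hs]⟩
  zero_mem' := ⟨0, fun y _ => ⟨0, by rw [map_zero, zero_mul]⟩⟩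
  algebraMap_mem' := by
    intro r
    exact ⟨0, fun y _ => ⟨r * y, by rw [map_mul]⟩⟩

end Overring

/-!
If `D = I⁻¹` were a ring, then `I D · D ⊆ I D ⊆ R`, so `I D ⊆ D⁻¹`, a divisorial ideal; hence
`R = (I D)_t ⊆ D⁻¹`, i.e. `D ⊆ R`. Then `I D ⊆ I`, and `R = (I D)_t ⊆ I_t = I`, so `I = R`.
-/

section Closure

variable {A : Type*} [CommRing A] {K : Type*} [Field K] [Algebra A K]

lemma one_div_le_one_div_of_le {X Y : Submodule A K} (h : X ≤ Y) : 1 / Y ≤ 1 / X :=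
  Submodule.le_div_iff_mul_le.2 <| calc
    1 / Y * X ≤ Y * (1 / Y) := mul_comm Y (1 / Y) ▸ mul_le_mul_right h _
    _ ≤ 1 := Submodule.mul_one_div_le_one

lemma le_vOp (X : Submodule A K) : X ≤ vOp X :=
  Submodule.le_div_iff_mul_le.2 Submodule.mul_one_div_le_one

lemma vOp_mono {X Y : Submodule A K} (h : X ≤ Y) : vOp X ≤ vOp Y :=
  one_div_le_one_div_of_le (one_div_le_one_div_of_le h)

lemma vOp_one_div (X : Submodule A K) : vOp (1 / X) = 1 / X :=
  le_antisymm (one_div_le_one_div_of_le (le_vOp X)) (le_vOp _)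

lemma tOp_mono {X Y : Submodule A K} (h : X ≤ Y) : tOp X ≤ tOp Y :=
  sSup_le_sSup fun _ ⟨J, hJ, hJfg, hJX, hV⟩ => ⟨J, hJ, hJfg, hJX.trans h, hV⟩

lemma tOp_le_one_div {X Y : Submodule A K} (h : X ≤ 1 / Y) : tOp X ≤ 1 / Y :=
  sSup_le fun _ ⟨_, _, _, hJX, hV⟩ => hV ▸ (vOp_mono (hJX.trans h)).trans_eq (vOp_one_div Y)

lemma IsSubringOf.mul_self_le {D : Submodule A K} (hD : IsSubringOf D) : D * D ≤ D :=
  Submodule.mul_le.2 hD.2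

lemma mul_dual_le_one_div_dual {S : Submodule A K} (hS : dual S * dual S ≤ dual S) :
    S * dual S ≤ 1 / dual S :=
  Submodule.le_div_iff_mul_le.2 <| calc
    S * dual S * dual S = S * (dual S * dual S) := mul_assoc S _ _
    _ ≤ S * dual S := mul_le_mul_right hS S
    _ ≤ 1 := Submodule.mul_one_div_le_one

lemma dual_le_one_of_tOp_mul_dual_eq_one {S : Submodule A K} (hinv : tOp (S * dual S) = 1)
    (hS : dual S * dual S ≤ dual S) : dual S ≤ 1 :=
  Submodule.one_le_one_div.1 <| hinv ▸ tOp_le_one_div (mul_dual_le_one_div_dual hS)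

lemma one_le_of_tOp_mul_dual_eq_one {S : Submodule A K} (hinv : tOp (S * dual S) = 1)
    (ht : tOp S = S) (hS : dual S * dual S ≤ dual S) : 1 ≤ S :=
  calc 1 = tOp (S * dual S) := hinv.symm
    _ ≤ tOp (S * 1) := tOp_mono (mul_le_mul_right (dual_le_one_of_tOp_mul_dual_eq_one hinv hS) S)
    _ = S := by rw [mul_one, ht]

lemma eq_top_of_one_le_toK (hinj : Function.Injective (algebraMap A K)) {I : Ideal A}
    (h : 1 ≤ toK A K I) : I = ⊤ := by
  obtain ⟨i, hi, hi1⟩ := Submodule.mem_map.1 (Submodule.one_le.1 h)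
  have : i = 1 := hinj (hi1.trans (map_one _).symm)
  exact (Ideal.eq_top_iff_one I).2 (this ▸ hi)

end Closure

section Statements

variable {R : Type*} [CommRing R] [IsDomain R]
variable {K : Type*} [Field K] [Algebra R K] [IsFractionRing R K]

theorem statement_0_general (I : Ideal R) (htop : I ≠ ⊤)
    (htI : IsTIdeal K I) (hinv : IsTInvertible K I) :
    ¬ IsSubringOf (dual (toK R K I)) := fun hring =>
  htop <| eq_top_of_one_le_toK (IsFractionRing.injective R K)
    (one_le_of_tOp_mul_dual_eq_one hinv htI hring.mul_self_le)

/-- Let `R` be an integral domain (in particular a PVMD) and `I` a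
(nonzero, proper) `t`-ideal of `R`. If `I` is `t`-invertible, then the dual
`I⁻¹ = (R : I)` is not a subring of the quotient field `K`. -/
theorem statement_0 (I : Ideal R) (hbot : I ≠ ⊥) (htop : I ≠ ⊤)
    (htI : IsTIdeal K I) (hinv : IsTInvertible K I) :
    ¬ IsSubringOf (dual (toK R K I)) :=
  statement_0_general I htop htI hinv

end Statements

end

end PVMDPaper
end

section
/- Let R be a PVMD and T a t-linked overring of R. If M is a t-prime ideal of T and P = M ∩ R, then T_M = R_P and M = PR_P ∩ T. -/
/-!
Common definitions: star operations (`v`- and `t`-closure), `t`-ideals, `t`-invertibility,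
PVMDs, overrings, `t`-linked and `t`-flat overrings, localizations inside the quotient
field, Nagata and Kaplansky transforms, endomorphism rings of ideals.
-/

open scoped Classical

namespace PVMDPaper

noncomputable section

section MyHelpers

variable {A : Type*} [CommRing A] {K : Type*} [Field K] [Algebra A K]

lemma my_div_one_mono {I J : Submodule A K} (h : I ≤ J) :
    (1 : Submodule A K) / J ≤ 1 / I := by
  intro x hx
  rw [Submodule.mem_div_iff_forall_mul_mem] at hx ⊢
  exact fun y hy => hx y (h hy)

lemma my_vOp_mono {I J : Submodule A K} (h : I ≤ J) : vOp I ≤ vOp J :=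
  my_div_one_mono (my_div_one_mono h)

lemma my_one_mem_vOp {I : Submodule A K} (h : dual I = 1) : (1 : K) ∈ vOp I := by
  have h' : (1 : Submodule A K) / I = 1 := h
  rw [vOp, h', Submodule.mem_div_iff_forall_mul_mem]
  intro y hy
  rwa [one_mul]

lemma my_tOp_elim {I : Submodule A K} {x : K} (hx : x ∈ tOp I) (hx0 : x ≠ 0) :
    ∃ J : Submodule A K, J ≠ ⊥ ∧ J.FG ∧ J ≤ I ∧ x ∈ vOp J := by
  set S : Set (Submodule A K) :=
    {V | ∃ J : Submodule A K, J ≠ ⊥ ∧ J.FG ∧ J ≤ I ∧ V = vOp J} with hS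
  have hx' : x ∈ sSup S := hx
  rcases S.eq_empty_or_nonempty with h | h
  · rw [h, sSup_empty] at hx'
    exact absurd ((Submodule.mem_bot A).mp hx') hx0
  · have hdir : DirectedOn (· ≤ ·) S := by
      rintro _ ⟨J₁, h1, f1, l1, rfl⟩ _ ⟨J₂, h2, f2, l2, rfl⟩
      refine ⟨vOp (J₁ ⊔ J₂), ⟨J₁ ⊔ J₂, ?_, f1.sup f2, sup_le l1 l2, rfl⟩,
        my_vOp_mono le_sup_left, my_vOp_mono le_sup_right⟩
      intro hb
      exact h1 (le_bot_iff.mp (hb ▸ le_sup_left))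
    obtain ⟨V, ⟨J, hJne, hJfg, hJle, rfl⟩, hxV⟩ :=
      (Submodule.mem_sSup_of_directed h hdir).mp hx'
    exact ⟨J, hJne, hJfg, hJle, hxV⟩

end MyHelpers

section MyKey

variable {R : Type*} [CommRing R] [IsDomain R]
variable {K : Type*} [Field K] [Algebra R K] [IsFractionRing R K]

lemma my_coe_algebraMap (T : Subalgebra R K) (r : R) :
    (algebraMap (↥T) K) (algebraMap R (↥T) r) = algebraMap R K r :=
  (IsScalarTower.algebraMap_apply R (↥T) K r).symm

lemma my_extendI_fg {B : Ideal R} (h : B.FG) (T : Subalgebra R K) : (extendI B T).FG := by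
  obtain ⟨s, hs⟩ := h
  have heq : extendI B T = Submodule.span (↥T) (algebraMap R K '' (s : Set R)) := by
    apply le_antisymm
    · rw [extendI, Submodule.span_le]
      rintro _ ⟨b, hb, rfl⟩
      replace hb : b ∈ Submodule.span R (s : Set R) := by rw [← hs] at hb; exact hb
      induction hb using Submodule.span_induction with
      | mem y hy => exact Submodule.subset_span ⟨y, hy, rfl⟩
      | zero => rw [map_zero]; exact Submodule.zero_mem _
      | add y z _ _ hy hz => rw [map_add]; exact Submodule.add_mem _ hy hz
      | smul r y _ hy =>
        have : algebraMap R K (r • y) = (algebraMap R (↥T) r) • (algebraMap R K y) := by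
          rw [smul_eq_mul, map_mul, Algebra.smul_def, my_coe_algebraMap]
        rw [this]
        exact Submodule.smul_mem _ _ hy
    · apply Submodule.span_mono
      apply Set.image_mono
      rw [← hs]
      exact Submodule.subset_span
  rw [heq]
  exact Submodule.fg_span ((s.finite_toSet).image _)

lemma my_key (hR : IsPVMD R K) (T : Subalgebra R K) (hT : IsTLinked T)
    (M : Ideal T) (hM : M.IsPrime) (htM : IsTIdeal K M)
    {a c : R} (ha : a ≠ 0) (hc : c ≠ 0) :
    ∃ A C : R, a * C = c * A ∧
      ∃ r s : R, r * A + s * C ∉ M.comap (algebraMap R T) := by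
  set P := M.comap (algebraMap R T) with hP
  have hinj : Function.Injective (algebraMap R K) := IsFractionRing.injective R K
  set J : Ideal R := Ideal.span {a, c} with hJ
  have hJ0 : J ≠ ⊥ := by
    intro h
    apply ha
    have haJ : a ∈ J := Ideal.subset_span (by simp)
    rwa [h, Ideal.mem_bot] at haJ
  have hJfg : J.FG := Submodule.fg_span (Set.toFinite _)
  have h1 := hR J hJ0 hJfg
  have hone : (1 : K) ∈ tOp (toK R K J * dual (toK R K J)) := by
    rw [h1]; exact Submodule.one_le.mp le_rfl
  obtain ⟨J₀, hJ₀ne, hJ₀fg, hJ₀le, hJ₀v⟩ := my_tOp_elim hone one_ne_zero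
  have hprod : toK R K J * dual (toK R K J) ≤ 1 := by
    apply Submodule.mul_le.mpr
    intro i hi j hj
    have hj' : j ∈ (1 : Submodule R K) / toK R K J := hj
    rw [mul_comm]
    exact Submodule.mem_div_iff_forall_mul_mem.mp hj' i hi
  have hJ₀le1 : J₀ ≤ 1 := hJ₀le.trans hprod
  have hdual : dual J₀ = 1 := by
    apply le_antisymm
    · intro y hy
      have h1y := Submodule.mem_div_iff_forall_mul_mem.mp
        (show (1 : K) ∈ (1 : Submodule R K) / ((1 : Submodule R K) / J₀) from hJ₀v) y hy
      rwa [one_mul] at h1y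
    · intro y hy
      show y ∈ (1 : Submodule R K) / J₀
      rw [Submodule.mem_div_iff_forall_mul_mem]
      intro z hz
      have := Submodule.mul_mem_mul hy (hJ₀le1 hz)
      rwa [mul_one] at this
  set B : Ideal R := Submodule.comap (Algebra.linearMap R K) J₀ with hB
  have htoKB : toK R K B = J₀ := by
    rw [toK, Submodule.map_comap_eq, ← Submodule.one_eq_range, inf_eq_right.mpr hJ₀le1]
  have htoKB' : Submodule.map (Algebra.linearMap R K) B = J₀ := htoKB
  have hBfg : B.FG :=
    Submodule.fg_of_fg_map_injective (Algebra.linearMap R K) hinj (by rw [htoKB']; exact hJ₀fg)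
  have hBdual : dual (toK R K B) = 1 := by rw [htoKB]; exact hdual
  have hTB : dual (extendI B T) = 1 := hT B hBfg hBdual
  have hex : ∃ b ∈ B, b ∉ P := by
    by_contra hcon
    push_neg at hcon
    have hle : extendI B T ≤ toK (↥T) K M := by
      rw [extendI, Submodule.span_le]
      rintro _ ⟨b, hb, rfl⟩
      exact ⟨algebraMap R (↥T) b, hcon b hb, by simpa using my_coe_algebraMap T b⟩
    have hne' : extendI B T ≠ ⊥ := by
      obtain ⟨z, hzJ, hz0⟩ := Submodule.exists_mem_ne_zero_of_ne_bot hJ₀ne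
      obtain ⟨b, hbB, hbz⟩ : ∃ b ∈ B, algebraMap R K b = z := by
        have hz1 : z ∈ (1 : Submodule R K) := hJ₀le1 hzJ
        obtain ⟨b, hb⟩ := Submodule.mem_one.mp hz1
        exact ⟨b, show Algebra.linearMap R K b ∈ J₀ by simpa [hb] using hzJ, hb⟩
      intro hbot
      have : algebraMap R K b ∈ extendI B T := Submodule.subset_span ⟨b, hbB, rfl⟩
      rw [hbot, Submodule.mem_bot] at this
      exact hz0 (by rw [← hbz, this])
    have hvle : vOp (extendI B T) ≤ toK (↥T) K M := by
      have hmem : vOp (extendI B T) ∈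
          {V | ∃ J' : Submodule (↥T) K, J' ≠ ⊥ ∧ J'.FG ∧ J' ≤ toK (↥T) K M ∧ V = vOp J'} :=
        ⟨extendI B T, hne', my_extendI_fg hBfg T, hle, rfl⟩
      calc vOp (extendI B T) ≤ tOp (toK (↥T) K M) := le_sSup hmem
        _ = toK (↥T) K M := htM
    have h1M : (1 : K) ∈ toK (↥T) K M := hvle (my_one_mem_vOp hTB)
    obtain ⟨m, hm, hm1⟩ := h1M
    apply hM.ne_top
    rw [Ideal.eq_top_iff_one]
    have hm' : m = 1 := Subtype.val_injective (by simpa using hm1)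
    rwa [← hm']
  obtain ⟨b0, hb0B, hb0P⟩ := hex
  have hfb0 : algebraMap R K b0 ∈ toK R K J * dual (toK R K J) := by
    apply hJ₀le
    rw [← htoKB]
    exact ⟨b0, hb0B, rfl⟩
  have main : ∀ z ∈ toK R K J * dual (toK R K J),
      z ∈ toK R K P ∨ ∃ A C : R, a * C = c * A ∧ ∃ r s : R, r * A + s * C ∉ P := by
    intro z hz
    refine Submodule.mul_induction_on hz ?_ ?_
    · rintro y hy q hq
      obtain ⟨j, hj, rfl⟩ := hy
      obtain ⟨r, s, hrs⟩ := Ideal.mem_span_pair.mp hj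
      have hq' : q ∈ (1 : Submodule R K) / toK R K J := hq
      have hqa : q * algebraMap R K a ∈ (1 : Submodule R K) :=
        Submodule.mem_div_iff_forall_mul_mem.mp hq' _ ⟨a, Ideal.subset_span (by simp), rfl⟩
      have hqc : q * algebraMap R K c ∈ (1 : Submodule R K) :=
        Submodule.mem_div_iff_forall_mul_mem.mp hq' _ ⟨c, Ideal.subset_span (by simp), rfl⟩
      obtain ⟨A, hA⟩ := Submodule.mem_one.mp hqa
      obtain ⟨C, hC⟩ := Submodule.mem_one.mp hqc
      have hAC : a * C = c * A := by
        apply hinj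
        rw [map_mul, map_mul, hA, hC]
        ring
      have hval : (Algebra.linearMap R K) j * q = algebraMap R K (r * A + s * C) := by
        rw [map_add, map_mul, map_mul, hA, hC, Algebra.linearMap_apply, ← hrs,
          map_add, map_mul, map_mul]
        ring
      by_cases hrP : r * A + s * C ∈ P
      · left
        rw [hval]
        exact ⟨_, hrP, rfl⟩
      · right
        exact ⟨A, C, hAC, r, s, hrP⟩
    · rintro z₁ z₂ (h1 | h1) (h2 | h2)
      · exact Or.inl (Submodule.add_mem _ h1 h2)
      · exact Or.inr h2
      · exact Or.inr h1
      · exact Or.inr h1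
  rcases main _ hfb0 with h | h
  · exfalso
    obtain ⟨p, hp, hpe⟩ := h
    exact hb0P (hinj hpe ▸ hp)
  · exact h

lemma my_rep (hR : IsPVMD R K) (T : Subalgebra R K) (hT : IsTLinked T)
    (M : Ideal T) (hM : M.IsPrime) (htM : IsTIdeal K M)
    {x : K} (hx : x ≠ 0) :
    ∃ A C : R, x * algebraMap R K C = algebraMap R K A ∧ C ≠ 0 ∧
      ∃ r s : R, r * A + s * C ∉ M.comap (algebraMap R T) := by
  have hinj : Function.Injective (algebraMap R K) := IsFractionRing.injective R K
  obtain ⟨⟨a, c⟩, hsurj⟩ := IsLocalization.surj (nonZeroDivisors R) x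
  have hc : (c : R) ≠ 0 := nonZeroDivisors.coe_ne_zero c
  have hfc : algebraMap R K (c : R) ≠ 0 := fun h => hc (hinj (by rw [h, map_zero]))
  have ha : a ≠ 0 := by
    intro h
    rw [h, map_zero] at hsurj
    exact hx ((mul_eq_zero.mp hsurj).resolve_right hfc)
  obtain ⟨A, C, hAC, r, s, hu⟩ := my_key hR T hT M hM htM ha hc
  have hC0 : C ≠ 0 := by
    intro h
    have hA0 : A = 0 := by
      have h2 := hAC
      rw [h, mul_zero] at h2
      exact (mul_eq_zero.mp h2.symm).resolve_left hc
    apply hu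
    rw [h, hA0, mul_zero, mul_zero, add_zero]
    exact Submodule.zero_mem _
  have hxC : x * algebraMap R K C = algebraMap R K A := by
    have h1 : (x * algebraMap R K C) * algebraMap R K (c : R)
        = algebraMap R K A * algebraMap R K (c : R) := by
      calc (x * algebraMap R K C) * algebraMap R K (c : R)
          = (x * algebraMap R K (c : R)) * algebraMap R K C := by ring
        _ = algebraMap R K a * algebraMap R K C := by rw [hsurj]
        _ = algebraMap R K (a * C) := (map_mul _ _ _).symm
        _ = algebraMap R K (c * A) := by rw [hAC]
        _ = algebraMap R K A * algebraMap R K (c : R) := by rw [map_mul]; ring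
    exact mul_right_cancel₀ hfc h1
  exact ⟨A, C, hxC, hC0, r, s, hu⟩

end MyKey

section Statements

variable {R : Type*} [CommRing R] [IsDomain R]
variable {K : Type*} [Field K] [Algebra R K] [IsFractionRing R K]

/-- Let `R` be a PVMD and `T` a `t`-linked overring of `R`. If `M` is a
`t`-prime ideal of `T` and `P = M ∩ R`, then `T_M = R_P` and `M = P R_P ∩ T`. -/
theorem statement_6 (hR : IsPVMD R K) (T : Subalgebra R K) (hT : IsTLinked T)
    (M : Ideal T) (hM : M.IsPrime) (htM : IsTIdeal K M) :
    loc K M = loc K (M.comap (algebraMap R T)) ∧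
      Subtype.val '' (M : Set T) =
        locIdealAt K (M.comap (algebraMap R T)) (M.comap (algebraMap R T)) ∩ (T : Set K) := by
  classical
  have hinj : Function.Injective (algebraMap R K) := IsFractionRing.injective R K
  have einj : Function.Injective (algebraMap (↥T) K) := by
    intro x y h
    exact Subtype.val_injective h
  have hval : ∀ t : ↥T, algebraMap (↥T) K t = (t : K) := fun t => rfl
  have h1P : (1 : R) ∉ M.comap (algebraMap R T) := by
    intro h
    exact hM.ne_top ((Ideal.eq_top_iff_one M).mpr (by simpa using Ideal.mem_comap.mp h))
  constructor
  · ext x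
    constructor
    · rintro ⟨t, u, huM, hxu⟩
      by_cases hx0 : x = 0
      · exact ⟨0, 1, h1P, by simp [hx0]⟩
      obtain ⟨A, C, hxC, hC0, r, s, hu⟩ := my_rep hR T hT M hM htM hx0
      by_cases hCP : C ∈ M.comap (algebraMap R T)
      · exfalso
        have hAP : A ∉ M.comap (algebraMap R T) := by
          intro hA
          exact hu (Submodule.add_mem _ (Ideal.mul_mem_left _ r hA) (Ideal.mul_mem_left _ s hCP))
        have heqK : algebraMap (↥T) K (algebraMap R (↥T) A * u)
            = algebraMap (↥T) K (t * algebraMap R (↥T) C) := by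
          rw [map_mul, map_mul, my_coe_algebraMap, my_coe_algebraMap, ← hxC, ← hxu]
          ring
        have heq : algebraMap R (↥T) A * u = t * algebraMap R (↥T) C := einj heqK
        have hmem : algebraMap R (↥T) A * u ∈ M := by
          rw [heq]
          exact Ideal.mul_mem_left _ _ (Ideal.mem_comap.mp hCP)
        rcases hM.mem_or_mem hmem with h | h
        · exact hAP (Ideal.mem_comap.mpr h)
        · exact huM h
      · exact ⟨A, C, hCP, hxC⟩
    · rintro ⟨a, u, huP, hxu⟩
      refine ⟨algebraMap R (↥T) a, algebraMap R (↥T) u, fun h => huP (Ideal.mem_comap.mpr h), ?_⟩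
      rw [my_coe_algebraMap, my_coe_algebraMap]
      exact hxu
  · ext x
    constructor
    · rintro ⟨m, hm, rfl⟩
      refine ⟨?_, m.2⟩
      by_cases hx0 : (m : K) = 0
      · exact ⟨0, Submodule.zero_mem _, 1, h1P, by simp [hx0]⟩
      obtain ⟨A, C, hxC, hC0, r, s, hu⟩ := my_rep hR T hT M hM htM hx0
      have hAe : algebraMap R (↥T) A = m * algebraMap R (↥T) C := by
        apply einj
        rw [map_mul, my_coe_algebraMap, my_coe_algebraMap, hval, ← hxC]
      have hAP : A ∈ M.comap (algebraMap R T) := by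
        apply Ideal.mem_comap.mpr
        rw [hAe]
        exact M.mul_mem_right _ hm
      have hCP : C ∉ M.comap (algebraMap R T) := by
        intro h
        exact hu (Submodule.add_mem _ (Ideal.mul_mem_left _ r hAP) (Ideal.mul_mem_left _ s h))
      exact ⟨A, hAP, C, hCP, hxC⟩
    · rintro ⟨⟨p, hp, u, huP, hxu⟩, hxT⟩
      refine ⟨⟨x, hxT⟩, ?_, rfl⟩
      have heq : (⟨x, hxT⟩ : ↥T) * algebraMap R (↥T) u = algebraMap R (↥T) p := by
        apply einj
        rw [map_mul, my_coe_algebraMap, my_coe_algebraMap, hval]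
        exact hxu
      have hmem : (⟨x, hxT⟩ : ↥T) * algebraMap R (↥T) u ∈ M := by
        rw [heq]
        exact Ideal.mem_comap.mp hp
      rcases hM.mem_or_mem hmem with h | h
      · exact h
      · exact absurd h (fun hh => huP (Ideal.mem_comap.mpr hh))


end Statements

end

end PVMDPaper
end

section
/- Let R be a PVMD, I a t-ideal of R, and P a minimal prime ideal over I in R. If there is a finitely generated ideal J of R such that I ⊆ J ⊆ P, then I⁻¹ is not a subring of the quotient field K. -/
/-!
Common definitions: star operations (`v`- and `t`-closure), `t`-ideals, `t`-invertibility,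
PVMDs, overrings, `t`-linked and `t`-flat overrings, localizations inside the quotient
field, Nagata and Kaplansky transforms, endomorphism rings of ideals.
-/

open scoped Classical

namespace PVMDPaper

noncomputable section

/-!
Suppose `I⁻¹` is a ring. Being finitely generated and nonzero, `J` is `t`-invertible, hence
`v`-invertible: `(J J⁻¹)⁻¹ = R`, and then `((J J⁻¹)ⁿ)⁻¹ = R` for all `n`. Since `P` is minimal
over `I` and `J ⊆ P` is finitely generated, some `s ∉ P` and `N ≥ 1` satisfy `F := s Jᴺ ⊆ I`.
As `J⁻¹ ⊆ I⁻¹` and `I⁻¹` is a ring, `(J⁻¹)²ᴺ ⊆ I⁻¹`, so for `x ∈ F⁻¹`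
`x s² (J J⁻¹)²ᴺ = (x F) (F (J⁻¹)²ᴺ) ⊆ R · I I⁻¹ ⊆ R`, i.e. `x s² ∈ R`.
Thus `s² ∈ F_v ⊆ I_t = I ⊆ P`, contradicting `s ∉ P`.
-/

section MinimalPrimes

variable {R : Type*} [CommRing R]

theorem _root_.Ideal.exists_mul_pow_mem_of_mem_minimalPrimes {I P : Ideal R}
    (hP : P ∈ I.minimalPrimes) {x : R} (hx : x ∈ P) : ∃ s ∉ P, ∃ n : ℕ, s * x ^ n ∈ I := by
  have := hP.isPrime
  let A := Localization.AtPrime P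
  have hrad : algebraMap R A x ∈ (I.map (algebraMap R A)).radical := by
    rw [IsLocalization.AtPrime.radical_map_of_mem_minimalPrimes A P I hP]
    exact Ideal.mem_map_of_mem _ hx
  obtain ⟨n, hn⟩ := hrad
  rw [← map_pow, IsLocalization.algebraMap_mem_map_algebraMap_iff P.primeCompl] at hn
  obtain ⟨s, hs, hsx⟩ := hn
  exact ⟨s, hs, n, hsx⟩

theorem _root_.Ideal.exists_span_singleton_mul_pow_le_of_mem_minimalPrimes {I P J : Ideal R}
    (hP : P ∈ I.minimalPrimes) (hJ : J.FG) (hJP : J ≤ P) :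
    ∃ s ∉ P, ∃ n : ℕ, Ideal.span {s} * J ^ n ≤ I := by
  have := hP.isPrime
  obtain ⟨S, rfl⟩ := hJ
  choose! s hsP n hn using fun j (hj : j ∈ S) =>
    Ideal.exists_mul_pow_mem_of_mem_minimalPrimes hP (hJP (Ideal.subset_span hj))
  refine ⟨∏ j ∈ S, s j, fun h => ?_, ?_⟩
  · obtain ⟨j, hj, hjP⟩ := Ideal.IsPrime.prod_mem_iff.1 h
    exact hsP j hj hjP
  have hrad : Ideal.span (S : Set R) ≤ (I.colon {∏ j ∈ S, s j}).radical := by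
    refine Ideal.span_le.2 fun j hj => ⟨n j, ?_⟩
    rw [Submodule.mem_colon_singleton, smul_eq_mul, ← Finset.mul_prod_erase S s hj]
    convert I.mul_mem_left (∏ i ∈ S.erase j, s i) (hn j hj) using 1
    ring
  obtain ⟨N, hN⟩ := Ideal.exists_pow_le_of_le_radical_of_fg hrad ⟨S, rfl⟩
  refine ⟨N, Ideal.span_singleton_mul_le_iff.2 fun z hz => ?_⟩
  simpa only [Submodule.mem_colon_singleton, smul_eq_mul, mul_comm] using hN hz

end MinimalPrimes

section Division

variable {R A : Type*} [CommSemiring R] [CommSemiring A] [Algebra R A]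

theorem _root_.Submodule.one_div_le_one_div_of_le {I J : Submodule R A} (hIJ : I ≤ J) :
    1 / J ≤ 1 / I := by
  rw [Submodule.le_div_iff_mul_le, mul_comm]
  exact (mul_le_mul' hIJ le_rfl).trans Submodule.mul_one_div_le_one

theorem _root_.Submodule.one_div_pow_le_one {G : Submodule R A} (hG : 1 / G ≤ 1) (n : ℕ) :
    1 / G ^ n ≤ 1 := by
  induction n with
  | zero => simpa using Submodule.mul_one_div_le_one (I := (1 : Submodule R A))
  | succ n ih =>
    refine le_trans ?_ ih
    rw [Submodule.le_div_iff_mul_le]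
    refine le_trans ?_ hG
    rw [Submodule.le_div_iff_mul_le, mul_assoc, ← pow_succ, mul_comm]
    exact Submodule.mul_one_div_le_one

theorem _root_.Submodule.pow_le_self_of_mul_self_le {D : Submodule R A} (hD : D * D ≤ D)
    {n : ℕ} (hn : n ≠ 0) : D ^ n ≤ D := by
  obtain ⟨m, rfl⟩ := Nat.exists_eq_add_one_of_ne_zero hn
  clear hn
  induction m with
  | zero => exact (pow_one D).le
  | succ m ih =>
    rw [pow_succ]
    exact (mul_le_mul' ih le_rfl).trans hD

end Division

section StarOperations

variable {A K : Type*} [CommRing A] [Field K] [Algebra A K]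

theorem vOp_mono_s7 {I J : Submodule A K} (hIJ : I ≤ J) : vOp I ≤ vOp J :=
  Submodule.one_div_le_one_div_of_le (Submodule.one_div_le_one_div_of_le hIJ)

theorem tOp_le_vOp (X : Submodule A K) : tOp X ≤ vOp X :=
  sSup_le fun _ ⟨_, _, _, hJX, hV⟩ => hV ▸ vOp_mono_s7 hJX

theorem vOp_le_tOp {J X : Submodule A K} (hJ : J ≠ ⊥) (hJfg : J.FG) (hJX : J ≤ X) :
    vOp J ≤ tOp X :=
  le_sSup ⟨J, hJ, hJfg, hJX, rfl⟩

theorem dual_le_one_of_tOp_eq_one {X : Submodule A K} (hX : tOp X = 1) : dual X ≤ 1 := by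
  have h1 : (1 : K) ∈ vOp X := tOp_le_vOp X (hX ▸ Submodule.one_le.1 le_rfl)
  exact Submodule.one_mem_div.1 h1

theorem sq_mem_vOp_span_singleton_mul_pow {I J : Submodule A K} {τ : K} {N : ℕ} (hN : N ≠ 0)
    (hI : dual I * dual I ≤ dual I) (hIJ : I ≤ J) (hJ : dual (J * dual J) ≤ 1)
    (hτ : Submodule.span A {τ} * J ^ N ≤ I) :
    τ ^ 2 ∈ vOp (Submodule.span A {τ} * J ^ N) := by
  set T := Submodule.span A {τ}
  set F := T * J ^ N
  have hdualJ : dual J ^ (2 * N) ≤ dual I :=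
    (pow_le_pow_left' (Submodule.one_div_le_one_div_of_le hIJ) _).trans
      (Submodule.pow_le_self_of_mul_self_le hI (by omega))
  have hFdual : F * dual J ^ (2 * N) ≤ 1 :=
    (mul_le_mul' hτ hdualJ).trans Submodule.mul_one_div_le_one
  have hTT : T * T * dual F ≤ 1 := by
    refine le_trans ?_ (Submodule.one_div_pow_le_one hJ (2 * N))
    rw [Submodule.le_div_iff_mul_le]
    calc T * T * dual F * (J * dual J) ^ (2 * N)
        = (F * dual F) * (F * dual J ^ (2 * N)) := by simp only [F, dual]; ring
      _ ≤ 1 * 1 := mul_le_mul' Submodule.mul_one_div_le_one hFdual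
      _ = 1 := one_mul 1
  rw [sq]
  exact Submodule.le_div_iff_mul_le.2 hTT <| Submodule.mul_mem_mul
    (Submodule.mem_span_singleton_self τ) (Submodule.mem_span_singleton_self τ)

end StarOperations

section ToK

variable {A K : Type*} [CommRing A] [Field K] [Algebra A K]

theorem toK_span_singleton_mul_pow (s : A) (J : Ideal A) (n : ℕ) :
    toK A K (Ideal.span {s} * J ^ n) = Submodule.span A {algebraMap A K s} * toK A K J ^ n := by
  have hmap : Algebra.linearMap A K = (Algebra.ofId A K).toLinearMap := rfl
  rw [toK, hmap, Submodule.map_mul, Submodule.map_pow, Ideal.span, Submodule.map_span,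
    Set.image_singleton]
  rfl

variable [FaithfulSMul A K]

theorem algebraMap_mem_toK_iff {I : Ideal A} {x : A} : algebraMap A K x ∈ toK A K I ↔ x ∈ I :=
  ⟨fun ⟨_, hy, hyx⟩ => FaithfulSMul.algebraMap_injective A K hyx ▸ hy, Submodule.mem_map_of_mem⟩

theorem toK_ne_bot {I : Ideal A} (hI : I ≠ ⊥) : toK A K I ≠ ⊥ := by
  have := (Submodule.map_injective_of_injective (f := Algebra.linearMap A K)
    (FaithfulSMul.algebraMap_injective A K)).ne hI
  rwa [Submodule.map_bot] at this

end ToK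

section Statements

variable {R : Type*} [CommRing R] [IsDomain R]
variable {K : Type*} [Field K] [Algebra R K] [IsFractionRing R K]

/-- Let `R` be a PVMD, `I` a `t`-ideal of `R`, and `P` a minimal prime
of `I`. If there is a finitely generated ideal `J` with `I ⊆ J ⊆ P`, then `I⁻¹` is not
a subring of `K`. -/
theorem statement_7 (hR : IsPVMD R K) (I : Ideal R) (hbot : I ≠ ⊥) (htI : IsTIdeal K I)
    (P : Ideal R) (hP : P ∈ I.minimalPrimes)
    (J : Ideal R) (hJ : J.FG) (hIJ : I ≤ J) (hJP : J ≤ P) :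
    ¬ IsSubringOf (dual (toK R K I)) := by
  rintro ⟨-, hmul⟩
  have hPprime := hP.isPrime
  have hJbot : J ≠ ⊥ := ne_bot_of_le_ne_bot hbot hIJ
  obtain ⟨s, hsP, n, hs⟩ :=
    Ideal.exists_span_singleton_mul_pow_le_of_mem_minimalPrimes hP hJ hJP
  set F := Ideal.span {s} * J ^ (n + 1)
  have hFI : F ≤ I := (mul_le_mul' le_rfl (Ideal.pow_le_pow_right n.le_succ)).trans hs
  have hF : F ≠ ⊥ := by
    refine mul_ne_zero ?_ (pow_ne_zero _ hJbot)
    rw [Ne, Ideal.zero_eq_bot, Ideal.span_singleton_eq_bot]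
    exact fun h => hsP (h ▸ P.zero_mem)
  have hsq : algebraMap R K s ^ 2 ∈ vOp (toK R K F) := by
    rw [toK_span_singleton_mul_pow]
    refine sq_mem_vOp_span_singleton_mul_pow n.succ_ne_zero (Submodule.mul_le.2 hmul)
      (Submodule.map_mono hIJ) (dual_le_one_of_tOp_eq_one (hR J hJbot hJ)) ?_
    rw [← toK_span_singleton_mul_pow]
    exact Submodule.map_mono hFI
  have hsI : s ^ 2 ∈ I := by
    rw [← algebraMap_mem_toK_iff (K := K), map_pow, ← htI]
    have hFfg : F.FG := (Submodule.fg_span_singleton s).mul hJ.pow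
    exact vOp_le_tOp (toK_ne_bot hF) (Submodule.FG.map _ hFfg) (Submodule.map_mono hFI) hsq
  exact hsP (hPprime.mem_of_pow_mem 2 (hP.1.2 hsI))

end Statements

end

end PVMDPaper
end
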